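/- Let F and G be uniform families with disjoint point sets, where F is k-uniform with τ(F) = t', G is (k+t)-uniform with τ(G) = t, and τ(G^⊤) > t + t'. Define H = G ∪ (F ⊛ G^⊤). Then H^⊤ = F^⊤ ⊛ G^⊤; in particular H is (k+t)-uniform and τ(H) = t + t'. -/
import Mathlib


open Finset

variable {α : Type*} {β : Type*}

/-- `C` is a blocking set of the family `F`: it meets every block of `F`. -/
def IsBlocking (F : Set (Finset α)) (C : Finset α) : Prop :=
  ∀ B ∈ F, ∃ x ∈ B, x ∈ C

/-- The transversal number `τ(F)`: the minimum size of a (finite) blocking set. -/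
noncomputable def tau (F : Set (Finset α)) : ℕ :=
  sInf {n | ∃ C : Finset α, C.card = n ∧ IsBlocking F C}

/-- The family `F^⊤` of transversals, i.e. minimum-size blocking sets of `F`. -/
noncomputable def transversals (F : Set (Finset α)) : Set (Finset α) :=
  {C | IsBlocking F C ∧ C.card = tau F}

/-- A family is intersecting if any two of its blocks meet. -/
def FamIntersecting (F : Set (Finset α)) : Prop :=
  ∀ A ∈ F, ∀ B ∈ F, ∃ x ∈ A, x ∈ B

/-- A family is `k`-uniform if all its blocks have size `k`. -/
def FamUniform (F : Set (Finset α)) (k : ℕ) : Prop :=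
  ∀ B ∈ F, B.card = k

/-- `F` has a finite blocking set (τ(F) < ∞). -/
def HasBlocking (F : Set (Finset α)) : Prop :=
  ∃ C : Finset α, IsBlocking F C

/-- Maximal intersecting family of `k`-sets: uniform, τ < ∞ and `F = F^⊤`. -/
noncomputable def MIF (F : Set (Finset α)) (k : ℕ) : Prop :=
  FamUniform F k ∧ HasBlocking F ∧ F = transversals F

/-- Closed intersecting family `CIF(k,t)`: a `k`-uniform intersecting family with
`τ(F) = t ≤ k - 1` and `F = (F ∪ F^⊤)^⊤`. -/
noncomputable def CIF (F : Set (Finset α)) (k t : ℕ) : Prop :=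
  FamUniform F k ∧ FamIntersecting F ∧ tau F = t ∧ t ≤ k - 1 ∧
    F = transversals (F ∪ transversals F)

/-- The point set of a family. -/
def pts (F : Set (Finset α)) : Set α := ⋃ B ∈ F, (B : Set α)

/-- `G ⊛ H`: all unions `A ∪ B` with `A ∈ G`, `B ∈ H` (for point-disjoint families
these are disjoint unions). -/
def star [DecidableEq α] (G H : Set (Finset α)) : Set (Finset α) :=
  {C | ∃ A ∈ G, ∃ B ∈ H, C = A ∪ B}

lemma tau_le_card' {F : Set (Finset α)} {C : Finset α} (h : IsBlocking F C) :
    tau F ≤ C.card :=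
  Nat.sInf_le ⟨C, rfl, h⟩

lemma exists_transversal' {F : Set (Finset α)} (h : HasBlocking F) :
    ∃ C, C ∈ transversals F := by
  obtain ⟨C, hC⟩ := h
  obtain ⟨D, hD, hDb⟩ := Nat.sInf_mem (⟨C.card, C, rfl, hC⟩ :
    {n | ∃ C : Finset α, C.card = n ∧ IsBlocking F C}.Nonempty)
  exact ⟨D, hDb, hD⟩

lemma transversal_subset_pts' [DecidableEq α] {F : Set (Finset α)} {C : Finset α}
    (h : C ∈ transversals F) : ↑C ⊆ pts F := by
  intro x hx
  by_contra hxp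
  have hxC : x ∈ C := hx
  have hb : IsBlocking F (C.erase x) := by
    intro B hB
    obtain ⟨y, hyB, hyC⟩ := h.1 B hB
    refine ⟨y, hyB, Finset.mem_erase.2 ⟨?_, hyC⟩⟩
    rintro rfl
    exact hxp (Set.mem_biUnion hB hyB)
  have h1 := tau_le_card' hb
  rw [Finset.card_erase_of_mem hxC] at h1
  have h2 : C.card = tau F := h.2
  have h3 : 0 < C.card := Finset.card_pos.2 ⟨x, hxC⟩
  omega

theorem stmt_11 [DecidableEq α] (F G : Set (Finset α)) (k t t' : ℕ)
    (hFU : FamUniform F k) (hFB : HasBlocking F) (hFt : tau F = t')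
    (hGU : FamUniform G (k + t)) (hGB : HasBlocking G) (hGt : tau G = t)
    (hGT : t + t' < tau (transversals G))
    (hd : Disjoint (pts F) (pts G)) :
    transversals (G ∪ star F (transversals G)) =
      star (transversals F) (transversals G) ∧
    FamUniform (G ∪ star F (transversals G)) (k + t) ∧
    tau (G ∪ star F (transversals G)) = t + t' := by
  classical
  set H : Set (Finset α) := G ∪ star F (transversals G) with hH
  -- claim 1
  have hstarblock : ∀ Cm ∈ star (transversals F) (transversals G),
      IsBlocking H Cm ∧ Cm.card = t + t' := by
    rintro _ ⟨A, hA, T, hT, rfl⟩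
    have hAcard : A.card = t' := hFt ▸ hA.2
    have hTcard : T.card = t := hGt ▸ hT.2
    have hdisj : Disjoint A T := by
      rw [Finset.disjoint_left]
      intro x hxA hxT
      exact Set.disjoint_left.1 hd (transversal_subset_pts' hA hxA)
        (transversal_subset_pts' hT hxT)
    constructor
    · rintro B (hBG | ⟨A', hA', T', hT', rfl⟩)
      · obtain ⟨x, hx, hxT⟩ := hT.1 B hBG
        exact ⟨x, hx, Finset.mem_union_right _ hxT⟩
      · obtain ⟨x, hx, hxA⟩ := hA.1 A' hA'
        exact ⟨x, Finset.mem_union_left _ hx, Finset.mem_union_left _ hxA⟩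
    · rw [Finset.card_union_of_disjoint hdisj, hAcard, hTcard, Nat.add_comm]
  -- claim 2
  have key : ∀ C : Finset α, IsBlocking H C →
      t + t' ≤ C.card ∧
      (C.card = t + t' → C ∈ star (transversals F) (transversals G)) := by
    intro C hC
    set CG : Finset α := C.filter (fun x => x ∈ pts G) with hCG
    set CF : Finset α := C.filter (fun x => x ∈ pts F) with hCF
    have hCGsub : CG ⊆ C := Finset.filter_subset _ _
    have hCFsub : CF ⊆ C := Finset.filter_subset _ _
    have hCGblock : IsBlocking G CG := by
      intro B hB
      obtain ⟨x, hxB, hxC⟩ := hC B (Or.inl hB)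
      exact ⟨x, hxB, Finset.mem_filter.2 ⟨hxC, Set.mem_biUnion hB hxB⟩⟩
    have hCGt : t ≤ CG.card := hGt ▸ tau_le_card' hCGblock
    by_cases hbig : tau (transversals G) ≤ CG.card
    · have : t + t' < C.card := lt_of_lt_of_le hGT
        (le_trans hbig (Finset.card_le_card hCGsub))
      exact ⟨le_of_lt this, fun h => absurd h (by omega)⟩
    · push_neg at hbig
      have hnb : ¬ IsBlocking (transversals G) CG := fun h =>
        absurd (tau_le_card' h) (not_le.2 hbig)
      rw [IsBlocking] at hnb
      push_neg at hnb
      obtain ⟨T₁, hT₁, hT₁C⟩ := hnb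
      have hT₁disj : ∀ x ∈ T₁, x ∉ C := by
        intro x hxT hxC
        exact hT₁C x hxT (Finset.mem_filter.2 ⟨hxC, transversal_subset_pts' hT₁ hxT⟩)
      have hCFblock : IsBlocking F CF := by
        intro A' hA'
        obtain ⟨x, hxB, hxC⟩ := hC (A' ∪ T₁) (Or.inr ⟨A', hA', T₁, hT₁, rfl⟩)
        rcases Finset.mem_union.1 hxB with hxA | hxT
        · exact ⟨x, hxA, Finset.mem_filter.2 ⟨hxC, Set.mem_biUnion hA' hxA⟩⟩
        · exact absurd hxC (hT₁disj x hxT)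
      have hCFt : t' ≤ CF.card := hFt ▸ tau_le_card' hCFblock
      have hdisjFG : Disjoint CF CG := by
        rw [Finset.disjoint_left]
        intro x hxF hxG
        exact Set.disjoint_left.1 hd (Finset.mem_filter.1 hxF).2
          (Finset.mem_filter.1 hxG).2
      have hunionsub : CF ∪ CG ⊆ C := Finset.union_subset hCFsub hCGsub
      have hcards : CF.card + CG.card ≤ C.card := by
        rw [← Finset.card_union_of_disjoint hdisjFG]
        exact Finset.card_le_card hunionsub
      refine ⟨by omega, fun hceq => ?_⟩
      have hCFcard : CF.card = t' := by omega
      have hCGcard : CG.card = t := by omega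
      have hCeq : C = CF ∪ CG := by
        refine (Finset.eq_of_subset_of_card_le hunionsub ?_).symm
        rw [Finset.card_union_of_disjoint hdisjFG]
        omega
      exact ⟨CF, ⟨hCFblock, hFt ▸ hCFcard⟩, CG, ⟨hCGblock, hGt ▸ hCGcard⟩, hCeq⟩
  obtain ⟨A₀, hA₀⟩ := exists_transversal' hFB
  obtain ⟨T₀, hT₀⟩ := exists_transversal' hGB
  have hmem : (A₀ ∪ T₀) ∈ star (transversals F) (transversals G) :=
    ⟨A₀, hA₀, T₀, hT₀, rfl⟩
  obtain ⟨hblk, hcard⟩ := hstarblock _ hmem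
  have htauH : tau H = t + t' := by
    refine le_antisymm (hcard ▸ tau_le_card' hblk) ?_
    refine le_csInf ⟨(A₀ ∪ T₀).card, A₀ ∪ T₀, rfl, hblk⟩ ?_
    rintro n ⟨C, rfl, hCb⟩
    exact (key C hCb).1
  refine ⟨?_, ?_, htauH⟩
  · ext C
    constructor
    · rintro ⟨hCb, hCc⟩
      exact (key C hCb).2 (by rw [hCc, htauH])
    · intro hCs
      obtain ⟨hb, hc⟩ := hstarblock C hCs
      exact ⟨hb, by rw [hc, htauH]⟩
  · rintro B (hBG | ⟨A, hA, T, hT, rfl⟩)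
    · exact hGU B hBG
    · have hdisj : Disjoint A T := by
        rw [Finset.disjoint_left]
        intro x hxA hxT
        exact Set.disjoint_left.1 hd (Set.mem_biUnion hA hxA)
          (transversal_subset_pts' hT hxT)
      rw [Finset.card_union_of_disjoint hdisj, hFU A hA, hT.2, hGt]
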